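/- Let X_1, …, X_n be i.i.d. real-valued square-integrable random variables with mean E[X_i] = 1/μ' and variance V[X_i] = σ², and let S = X_(k) denote the k-th order statistic (1 ≤ k ≤ n). Set A = 1/μ' + σ·√((k−1)/(n−k+1)). Suppose V[S] ≤ B for some B ≥ 0, that E[S] ≥ 0, and that λ > 0 satisfies λ·A < 1. Then E[S] + λ(E[S]² + V[S])/(2(1 − λ·E[S])) ≤ A + λ(A² + B)/(2(1 − λ·A)). -/

import Mathlib

open MeasureTheory ProbabilityTheory

/-- The `k`-th order statistic of a finite tuple of reals, with `k : Fin n` zero-indexed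
(so `orderStat x ⟨j-1, _⟩` is the `j`-th smallest of the values `x 0, …, x (n-1)`). -/
noncomputable def orderStat {n : ℕ} (x : Fin n → ℝ) (k : Fin n) : ℝ :=
  (x ∘ Tuple.sort x) k

lemma orderStat_le_sum_posPart {n : ℕ} (x : Fin n → ℝ) (j : Fin n) (t : ℝ) :
    ((n : ℝ) - (j : ℕ)) * (orderStat x j - t) ≤ ∑ i, max (x i - t) 0 := by
  have hmono := Tuple.monotone_sort x
  have hsum : ∑ i, max (x i - t) 0 = ∑ i, max ((x ∘ Tuple.sort x) i - t) 0 :=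
    (Equiv.sum_comp (Tuple.sort x) (fun i => max (x i - t) 0)).symm
  rw [hsum]
  have h1 : ∑ i ∈ Finset.Ici j, max ((x ∘ Tuple.sort x) i - t) 0 ≤
      ∑ i, max ((x ∘ Tuple.sort x) i - t) 0 :=
    Finset.sum_le_sum_of_subset_of_nonneg (Finset.subset_univ _)
      (fun i _ _ => le_max_right _ _)
  refine le_trans ?_ h1
  have h2 : ∀ i ∈ Finset.Ici j, (orderStat x j - t) ≤ max ((x ∘ Tuple.sort x) i - t) 0 := by
    intro i hi
    refine le_trans ?_ (le_max_left _ _)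
    have := hmono (Finset.mem_Ici.mp hi)
    simpa [orderStat] using sub_le_sub_right this t
  have h3 := Finset.card_nsmul_le_sum (Finset.Ici j) _ _ h2
  rw [Fin.card_Ici] at h3
  have hcast : ((n - (j:ℕ) : ℕ) : ℝ) = (n : ℝ) - (j : ℕ) := by
    have := j.2.le
    push_cast [Nat.cast_sub this]
    ring
  calc ((n : ℝ) - (j : ℕ)) * (orderStat x j - t)
      = ((n - (j:ℕ) : ℕ) : ℝ) * (orderStat x j - t) := by rw [hcast]
    _ ≤ ∑ i ∈ Finset.Ici j, max ((x ∘ Tuple.sort x) i - t) 0 := by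
        simpa [nsmul_eq_mul] using h3

lemma orderStat_zero_le {n : ℕ} (hn : 0 < n) (x : Fin n → ℝ) (j : Fin n) :
    orderStat x ⟨0, hn⟩ ≤ x j := by
  have hmono := Tuple.monotone_sort x
  have h := hmono (show (⟨0, hn⟩ : Fin n) ≤ (Tuple.sort x).symm j from
    Fin.mk_le_mk.mpr (Nat.zero_le _))
  simpa [orderStat] using h

lemma pk_mono (lam m1 m2 v1 v2 : ℝ) (hm1 : 0 ≤ m1) (h12 : m1 ≤ m2)
    (hv1 : 0 ≤ v1) (hv : v1 ≤ v2) (hlam : 0 < lam) (h2 : lam * m2 < 1) :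
    m1 + lam * (m1 ^ 2 + v1) / (2 * (1 - lam * m1)) ≤
      m2 + lam * (m2 ^ 2 + v2) / (2 * (1 - lam * m2)) := by
  have hd2 : 0 < 1 - lam * m2 := by linarith
  have hd1 : 0 < 1 - lam * m1 := by nlinarith
  have hnum : lam * (m1 ^ 2 + v1) ≤ lam * (m2 ^ 2 + v2) := by
    nlinarith [mul_nonneg (sub_nonneg.mpr h12) (show (0:ℝ) ≤ m1 + m2 by linarith)]
  have hdiv : lam * (m1 ^ 2 + v1) / (2 * (1 - lam * m1)) ≤
      lam * (m2 ^ 2 + v2) / (2 * (1 - lam * m2)) := by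
    apply div_le_div₀ (by nlinarith) hnum (by positivity) (by nlinarith)
  linarith

lemma mean_orderStat_le
    {Ω : Type*} [MeasurableSpace Ω] (P : Measure Ω) [IsProbabilityMeasure P]
    (n : ℕ) (hn : 1 ≤ n) (X : Fin n → Ω → ℝ)
    (hident : ∀ i j, IdentDistrib (X i) (X j) P P)
    (hL2 : ∀ i, MemLp (X i) 2 P)
    (mu σ : ℝ) (hσ : 0 ≤ σ)
    (hmean : ∀ i, ∫ ω, X i ω ∂P = mu)
    (hvar : ∀ i, variance (X i) P = σ ^ 2)
    (k : ℕ) (hk1 : 1 ≤ k) (hkn : k ≤ n)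
    (S : Ω → ℝ) (hS : ∀ ω, S ω = orderStat (fun i => X i ω) ⟨k - 1, Nat.sub_one_lt_of_le hk1 hkn⟩)
    (hSi : Integrable S P) :
    ∫ ω, S ω ∂P ≤ mu + σ * Real.sqrt (((k : ℝ) - 1) / ((n : ℝ) - k + 1)) := by
  set i0 : Fin n := ⟨0, by omega⟩ with hi0
  have hXint : ∀ i, Integrable (X i) P := fun i => (hL2 i).integrable one_le_two
  have hYint : ∀ (i : Fin n) (t : ℝ), Integrable (fun ω => max (X i ω - t) 0) P :=
    fun i t => ((hXint i).sub (integrable_const t)).pos_part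
  set dR : ℝ := (k : ℝ) - 1 with hdR
  set mR : ℝ := (n : ℝ) - k + 1 with hmR
  have hmRpos : 0 < mR := by
    have : (k : ℝ) ≤ (n : ℝ) := by exact_mod_cast hkn
    simp only [hmR]; linarith
  have hdRnn : 0 ≤ dR := by
    have : (1 : ℝ) ≤ (k : ℝ) := by exact_mod_cast hk1
    simp only [hdR]; linarith
  have hnR : (n : ℝ) = dR + mR := by simp only [hdR, hmR]; ring
  -- step 1: for any t, mR * (E[S] - t) ≤ n * E[(X_{i0} - t)^+]
  have key : ∀ t : ℝ, mR * ((∫ ω, S ω ∂P) - t) ≤ (n : ℝ) * ∫ ω, max (X i0 ω - t) 0 ∂P := by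
    intro t
    have hpt : ∀ ω, mR * (S ω - t) ≤ ∑ i, max (X i ω - t) 0 := by
      intro ω
      have h := orderStat_le_sum_posPart (fun i => X i ω) ⟨k - 1, by omega⟩ t
      have hc : ((n : ℝ) - ((⟨k - 1, by omega⟩ : Fin n) : ℕ)) = mR := by
        simp only [hmR]
        have : ((k - 1 : ℕ) : ℝ) = (k : ℝ) - 1 := by
          push_cast [Nat.cast_sub hk1]; ring
        rw [this]; ring
      rw [hc, ← hS ω] at h
      exact h
    have hint1 : Integrable (fun ω => mR * (S ω - t)) P :=
      ((hSi.sub (integrable_const t)).const_mul _)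
    have hint2 : Integrable (fun ω => ∑ i, max (X i ω - t) 0) P :=
      integrable_finset_sum _ (fun i _ => hYint i t)
    have hmono := integral_mono hint1 hint2 hpt
    have hL : ∫ ω, mR * (S ω - t) ∂P = mR * ((∫ ω, S ω ∂P) - t) := by
      rw [integral_const_mul, integral_sub hSi (integrable_const t), integral_const]
      simp
    have hid : ∀ i : Fin n, ∫ ω, max (X i ω - t) 0 ∂P = ∫ ω, max (X i0 ω - t) 0 ∂P := by
      intro i
      exact ((hident i i0).comp ((measurable_id.sub_const t).max measurable_const)).integral_eq
    have hRr : ∫ ω, ∑ i, max (X i ω - t) 0 ∂P = (n : ℝ) * ∫ ω, max (X i0 ω - t) 0 ∂P := by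
      rw [integral_finset_sum _ (fun i _ => hYint i t)]
      rw [Finset.sum_congr rfl (fun i _ => hid i), Finset.sum_const]
      simp [nsmul_eq_mul]
    rw [hL, hRr] at hmono
    exact hmono
  -- step 2: E[(X_{i0} - t)^+] ≤ ((mu - t) + sqrt(σ² + (mu - t)²))/2
  have posbound : ∀ t : ℝ, ∫ ω, max (X i0 ω - t) 0 ∂P ≤
      ((mu - t) + Real.sqrt (σ ^ 2 + (mu - t) ^ 2)) / 2 := by
    intro t
    set Y : Ω → ℝ := fun ω => X i0 ω - t with hYdef
    have hYL2 : MemLp Y 2 P := (hL2 i0).sub (memLp_const t)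
    have hYi : Integrable Y P := hYL2.integrable one_le_two
    have hmeanY : ∫ ω, Y ω ∂P = mu - t := by
      simp only [hYdef]
      rw [integral_sub (hXint i0) (integrable_const t), integral_const, hmean i0]
      simp
    have hXsq : ∫ ω, X i0 ω ^ 2 ∂P = σ ^ 2 + mu ^ 2 := by
      have hv := variance_eq_sub (hL2 i0)
      rw [hvar i0, hmean i0] at hv
      have : (∫ ω, (X i0 ^ 2) ω ∂P) = ∫ ω, X i0 ω ^ 2 ∂P := by
        apply integral_congr_ae; filter_upwards with ω; simp
      rw [this] at hv
      linarith [hv]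
    have hsq : ∫ ω, Y ω ^ 2 ∂P = σ ^ 2 + (mu - t) ^ 2 := by
      have hexp : ∫ ω, Y ω ^ 2 ∂P
          = ∫ ω, (X i0 ω ^ 2 - (2 * t) * X i0 ω + t ^ 2) ∂P := by
        apply integral_congr_ae; filter_upwards with ω; simp only [hYdef]; ring
      have hint3 : Integrable (fun ω => X i0 ω ^ 2 - 2 * t * X i0 ω) P :=
        ((hL2 i0).integrable_sq).sub ((hXint i0).const_mul (2 * t))
      rw [hexp, integral_add hint3
        (integrable_const _), integral_sub ((hL2 i0).integrable_sq)
        ((hXint i0).const_mul (2 * t)), integral_const_mul, hmean i0, hXsq, integral_const]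
      simp; ring
    have hAbsL2 : MemLp (fun ω => |Y ω|) 2 P := hYL2.abs
    have habs : (∫ ω, |Y ω| ∂P) ^ 2 ≤ ∫ ω, Y ω ^ 2 ∂P := by
      have h1 := variance_nonneg (fun ω => |Y ω|) P
      have h2 := variance_eq_sub hAbsL2
      have h3 : (∫ ω, ((fun ω => |Y ω|) ^ 2) ω ∂P) = ∫ ω, Y ω ^ 2 ∂P := by
        apply integral_congr_ae; filter_upwards with ω; simp [sq_abs]
      rw [h3] at h2
      linarith
    have habs' : ∫ ω, |Y ω| ∂P ≤ Real.sqrt (σ ^ 2 + (mu - t) ^ 2) := by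
      rw [← hsq]
      exact Real.le_sqrt_of_sq_le habs
    have hmax : ∫ ω, max (X i0 ω - t) 0 ∂P = ((∫ ω, Y ω ∂P) + ∫ ω, |Y ω| ∂P) / 2 := by
      have hcongr : ∫ ω, max (X i0 ω - t) 0 ∂P = ∫ ω, (Y ω + |Y ω|) / 2 ∂P := by
        apply integral_congr_ae; filter_upwards with ω
        simp only [hYdef]
        rcases le_total (X i0 ω - t) 0 with h | h
        · rw [max_eq_right h, abs_of_nonpos h]; ring
        · rw [max_eq_left h, abs_of_nonneg h]; ring
      rw [hcongr]
      rw [integral_div, integral_add hYi hYi.abs]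
    rw [hmax, hmeanY]
    have := habs'
    linarith
  -- combined bound for every t
  have final : ∀ t : ℝ, ∫ ω, S ω ∂P ≤
      t + (n : ℝ) / (2 * mR) * ((mu - t) + Real.sqrt (σ ^ 2 + (mu - t) ^ 2)) := by
    intro t
    have h1 := key t
    have h2 := posbound t
    have hnn : (0 : ℝ) ≤ (n : ℝ) := Nat.cast_nonneg n
    have h3 : (n : ℝ) * ∫ ω, max (X i0 ω - t) 0 ∂P ≤
        (n : ℝ) * (((mu - t) + Real.sqrt (σ ^ 2 + (mu - t) ^ 2)) / 2) :=
      mul_le_mul_of_nonneg_left h2 hnn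
    have h4 : mR * ((∫ ω, S ω ∂P) - t) ≤
        (n : ℝ) * (((mu - t) + Real.sqrt (σ ^ 2 + (mu - t) ^ 2)) / 2) := le_trans h1 h3
    rw [← sub_le_iff_le_add']
    rw [div_mul_eq_mul_div, le_div_iff₀ (by positivity)]
    calc ((∫ ω, S ω ∂P) - t) * (2 * mR) = 2 * (mR * ((∫ ω, S ω ∂P) - t)) := by ring
      _ ≤ 2 * ((n : ℝ) * (((mu - t) + Real.sqrt (σ ^ 2 + (mu - t) ^ 2)) / 2)) := by linarith
      _ = (n : ℝ) * ((mu - t) + Real.sqrt (σ ^ 2 + (mu - t) ^ 2)) := by ring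
  -- now choose t
  rcases eq_or_lt_of_le hk1 with hk1' | hk2
  · -- k = 1 : S is the minimum
    have hk : k = 1 := hk1'.symm
    subst hk
    have hzero : ((1 : ℕ) : ℝ) - 1 = 0 := by norm_num
    have hA0 : Real.sqrt (((1 : ℕ) : ℝ) - 1) = 0 := by simp
    have hptmin : ∀ ω, S ω ≤ X i0 ω := by
      intro ω
      rw [hS ω]
      exact orderStat_zero_le (by omega) (fun i => X i ω) i0
    have := integral_mono hSi (hXint i0) hptmin
    rw [hmean i0] at this
    have hsqrt0 : Real.sqrt ((((1 : ℕ) : ℝ) - 1) / ((n : ℝ) - (1 : ℕ) + 1)) = 0 := by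
      norm_num
    rw [hsqrt0]
    simpa using this
  · -- k ≥ 2
    have hdR1 : (1 : ℝ) ≤ dR := by
      have : (2 : ℝ) ≤ (k : ℝ) := by exact_mod_cast hk2
      simp only [hdR]; linarith
    rcases eq_or_lt_of_le hσ with hσ0 | hσpos
    · -- σ = 0
      have h := final mu
      rw [← hσ0] at h
      simp only [sub_self, ne_eq] at h
      have : Real.sqrt ((0:ℝ) ^ 2 + (0:ℝ) ^ 2) = 0 := by simp
      rw [this] at h
      simp at h
      rw [← hσ0]
      simpa using h
    · -- σ > 0
      set s : ℝ := Real.sqrt (mR * dR) with hsdef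
      have hspos : 0 < s := Real.sqrt_pos.mpr (by positivity)
      have hs2 : s ^ 2 = mR * dR := Real.sq_sqrt (by positivity)
      set u : ℝ := (dR - mR) / (2 * s) with hudef
      have h1u : Real.sqrt (1 + u ^ 2) = (mR + dR) / (2 * s) := by
        have heq : 1 + u ^ 2 = ((mR + dR) / (2 * s)) ^ 2 := by
          rw [hudef]
          field_simp [hudef]
          nlinarith [hs2]
        rw [heq, Real.sqrt_sq (by positivity)]
      have hsd : Real.sqrt (dR / mR) = dR / s := by
        have heq : dR / mR = (dR / s) ^ 2 := by
          rw [div_pow, hs2]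
          rw [div_eq_div_iff (by positivity) (by positivity)]
          ring
        rw [heq, Real.sqrt_sq (by positivity)]
      have h := final (mu + σ * u)
      have harg : σ ^ 2 + (mu - (mu + σ * u)) ^ 2 = σ ^ 2 * (1 + u ^ 2) := by ring
      rw [harg, Real.sqrt_mul (by positivity), Real.sqrt_sq hσ, h1u] at h
      have hgoal : mu + σ * u + (n : ℝ) / (2 * mR) *
          ((mu - (mu + σ * u)) + σ * ((mR + dR) / (2 * s))) = mu + σ * (dR / s) := by
        rw [hnR, hudef]
        field_simp
        ring
      rw [hgoal] at h
      rw [hsd]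
      exact h

/-- **Pollaczek–Khinchin upper bound for general service times.**
Let `X 0, …, X (n-1)` be i.i.d. square-integrable random variables with mean `1/μ'` and
variance `σ²`, let `S` be the `k`-th order statistic (`1 ≤ k ≤ n`), and set
`A = 1/μ' + σ √((k-1)/(n-k+1))`. If `V[S] ≤ B` with `B ≥ 0`, `E[S] ≥ 0` and `λ A < 1`
with `λ > 0`, then the Pollaczek–Khinchin expression evaluated at `(E[S], V[S])` is at
most its value at `(A, B)`. -/
theorem pollaczekKhinchin_orderStat_le
    {Ω : Type*} [MeasurableSpace Ω] (P : Measure Ω) [IsProbabilityMeasure P]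
    (n : ℕ) (hn : 1 ≤ n) (X : Fin n → Ω → ℝ)
    (hmeas : ∀ i, Measurable (X i))
    (hindep : iIndepFun (m := fun _ => Real.measurableSpace) X P)
    (hident : ∀ i j, IdentDistrib (X i) (X j) P P)
    (hL2 : ∀ i, MemLp (X i) 2 P)
    (μ' σ : ℝ) (hμ' : 0 < μ') (hσ : 0 ≤ σ)
    (hmean : ∀ i, ∫ ω, X i ω ∂P = 1 / μ')
    (hvar : ∀ i, variance (X i) P = σ ^ 2)
    (k : ℕ) (hk1 : 1 ≤ k) (hkn : k ≤ n)
    (S : Ω → ℝ) (hS : ∀ ω, S ω = orderStat (fun i => X i ω) ⟨k - 1, by omega⟩)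
    (A : ℝ) (hA : A = 1 / μ' + σ * Real.sqrt (((k : ℝ) - 1) / ((n : ℝ) - k + 1)))
    (B : ℝ) (hB0 : 0 ≤ B) (hVB : variance S P ≤ B)
    (hES : 0 ≤ ∫ ω, S ω ∂P)
    (lam : ℝ) (hlam : 0 < lam) (hlamA : lam * A < 1) :
    (∫ ω, S ω ∂P) +
        lam * ((∫ ω, S ω ∂P) ^ 2 + variance S P) / (2 * (1 - lam * ∫ ω, S ω ∂P)) ≤
      A + lam * (A ^ 2 + B) / (2 * (1 - lam * A)) := by
  have hv1 : 0 ≤ variance S P := variance_nonneg _ _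
  have hm1A : (∫ ω, S ω ∂P) ≤ A := by
    by_cases hSi : Integrable S P
    · rw [hA]
      exact mean_orderStat_le P n hn X hident hL2 (1 / μ') σ hσ hmean hvar k hk1 hkn S hS hSi
    · rw [integral_undef hSi, hA]
      positivity
  exact pk_mono lam _ A _ B hES hm1A hv1 hVB hlam hlamA
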